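/- Representer theorem: Let F be a reproducing kernel Hilbert space over a set X with reproducing kernel k, let z_1,...,z_N be points in X, let L : ℝ^N → ℝ be any loss functional of the values f(z_1),...,f(z_N), let Ω : [0,∞) → ℝ be strictly increasing, and let λ > 0. Then for any f ∈ F there exists a function h of the form h = ∑_{i=1}^N α_i k(·, z_i) with α_i ∈ ℝ such that L(h(z_1),...,h(z_N)) + λ Ω(‖h‖²) ≤ L(f(z_1),...,f(z_N)) + λ Ω(‖f‖²). In particular, any minimizer of the regularized risk can be taken in the span of {k(·, z_i)}. -/

import Mathlib

/-!
Project `f` orthogonally onto the span of the kernel sections `K (z i)`. The projection `h` is a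
combination of these sections; `f - h` is orthogonal to each of them, so by the reproducing
property `h` and `f` take the same values at every `z i`; and projecting does not increase the
norm. Hence the loss term is unchanged and, `Ω` being monotone, the penalty does not increase.
-/

open scoped InnerProductSpace

theorem exists_norm_sum_smul_le_and_inner_eq {𝕜 E ι : Type*} [RCLike 𝕜] [NormedAddCommGroup E]
    [InnerProductSpace 𝕜 E] [Fintype ι] (v : ι → E) (f : E) :
    ∃ α : ι → 𝕜, ‖∑ i, α i • v i‖ ≤ ‖f‖ ∧ ∀ i, ⟪∑ j, α j • v j, v i⟫_𝕜 = ⟪f, v i⟫_𝕜 := by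
  set S := Submodule.span 𝕜 (Set.range v)
  have : FiniteDimensional 𝕜 S := FiniteDimensional.span_of_finite 𝕜 (Set.finite_range v)
  obtain ⟨α, hα⟩ := (Submodule.mem_span_range_iff_exists_fun 𝕜).1 (S.starProjection_apply_mem f)
  refine ⟨α, hα ▸ S.norm_starProjection_apply_le f, fun i => ?_⟩
  have horth := S.starProjection_inner_eq_zero f (v i) (Submodule.subset_span ⟨i, rfl⟩)
  rw [← hα, inner_sub_left, sub_eq_zero] at horth
  exact horth.symm

theorem representer_theorem_general
    {X F : Type*} [NormedAddCommGroup F] [InnerProductSpace ℝ F]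
    (ev : F → X → ℝ) (K : X → F)
    (hrep : ∀ (f : F) (x : X), ev f x = inner ℝ f (K x))
    (N : ℕ) (z : Fin N → X) (L : (Fin N → ℝ) → ℝ)
    (Ω : ℝ → ℝ) (hΩ : StrictMonoOn Ω (Set.Ici 0))
    (lam : ℝ) (hlam : 0 < lam) (f : F) :
    ∃ (α : Fin N → ℝ) (h : F), h = ∑ i, α i • K (z i) ∧
      L (fun i => ev h (z i)) + lam * Ω (‖h‖ ^ 2)
        ≤ L (fun i => ev f (z i)) + lam * Ω (‖f‖ ^ 2) := by
  obtain ⟨α, hnorm, hinner⟩ := exists_norm_sum_smul_le_and_inner_eq (𝕜 := ℝ) (fun i => K (z i)) f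
  refine ⟨α, _, rfl, ?_⟩
  have hev : (fun i => ev (∑ j, α j • K (z j)) (z i)) = fun i => ev f (z i) := by
    funext i
    simp only [hrep]
    exact hinner i
  have hpenalty : Ω (‖∑ j, α j • K (z j)‖ ^ 2) ≤ Ω (‖f‖ ^ 2) :=
    hΩ.monotoneOn (Set.mem_Ici.2 (by positivity)) (Set.mem_Ici.2 (by positivity)) (by gcongr)
  rw [hev]
  gcongr

/-- Representer theorem: in an RKHS `F` over `X` with kernel sections `K x` and
reproducing property `ev f x = ⟪f, K x⟫`, for any `f` there is `h = ∑ αᵢ • K (z i)`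
whose regularized risk is at most that of `f`. -/
theorem representer_theorem
    {X F : Type*} [NormedAddCommGroup F] [InnerProductSpace ℝ F] [CompleteSpace F]
    (ev : F → X → ℝ) (K : X → F)
    (hrep : ∀ (f : F) (x : X), ev f x = inner ℝ f (K x))
    (N : ℕ) (z : Fin N → X) (L : (Fin N → ℝ) → ℝ)
    (Ω : ℝ → ℝ) (hΩ : StrictMonoOn Ω (Set.Ici 0))
    (lam : ℝ) (hlam : 0 < lam) (f : F) :
    ∃ (α : Fin N → ℝ) (h : F), h = ∑ i, α i • K (z i) ∧
      L (fun i => ev h (z i)) + lam * Ω (‖h‖ ^ 2)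
        ≤ L (fun i => ev f (z i)) + lam * Ω (‖f‖ ^ 2) :=
  representer_theorem_general ev K hrep N z L Ω hΩ lam hlam f
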